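/- Let Q be the generating measure of the random walk on 𝕋^d generated by n vectors α_1,…,α_n (mass 1/(2n) at each ±α_j). Then for every k ≥ 1, the discrepancy of the k-th convolution power from Haar measure satisfies D(Q^{*k}) ≥ k^{−n/2} / (π^d · 5^{n+1} · d^{n/2}). -/

import Mathlib

open MeasureTheory Real

/-- The d-dimensional torus. -/
abbrev Torus (d : ℕ) := Fin d → UnitAddCircle

noncomputable def toTorus {d : ℕ} (v : Fin d → ℝ) : Torus d := fun i => (v i : UnitAddCircle)

/-- The generating measure of the random walk: mass 1/(2n) at each of ±α_j. -/
noncomputable def genMeasure {n d : ℕ} (α : Fin n → Fin d → ℝ) : Measure (Torus d) :=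
  (2 * n : ENNReal)⁻¹ • ∑ j, (Measure.dirac (toTorus (α j)) + Measure.dirac (-(toTorus (α j))))

/-- k-fold convolution power of a measure on the torus. -/
noncomputable def convPow {d : ℕ} (μ : Measure (Torus d)) : ℕ → Measure (Torus d)
  | 0 => Measure.dirac 0
  | k + 1 => (convPow μ k).conv μ

/-- A circular arc: the image in the circle of `[a, b)`. -/
noncomputable def arcSet (a b : ℝ) : Set UnitAddCircle :=
  (fun x : ℝ => (x : UnitAddCircle)) '' Set.Ico a b

/-- A box in the torus with sides `[a i, b i)`. -/
noncomputable def box {d : ℕ} (a b : Fin d → ℝ) : Set (Torus d) :=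
  Set.univ.pi fun i => arcSet (a i) (b i)

/-- Discrepancy of a measure from Haar (volume) measure over boxes. -/
noncomputable def disc {d : ℕ} (P : Measure (Torus d)) : ℝ :=
  ⨆ a : Fin d → ℝ, ⨆ b : Fin d → ℝ,
    |(P (box a b)).toReal - (volume (box a b)).toReal|

/-! ### Auxiliary measure-theory lemmas -/

set_option linter.unusedSectionVars false

section MeasureLemmas
variable {G : Type*} [AddCommGroup G] [MeasurableSpace G] [MeasurableAdd₂ G]

lemma myDiracConv (x y : G) :
    (Measure.dirac x).conv (Measure.dirac y) = Measure.dirac (x + y) := by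
  unfold Measure.conv
  rw [Measure.dirac_prod, Measure.map_map measurable_add measurable_prodMk_left]
  have : ((fun p : G × G => p.1 + p.2) ∘ Prod.mk x) = fun y : G => x + y := rfl
  rw [this, Measure.map_dirac' (by fun_prop)]

lemma mySmulConv (c : ENNReal) (μ ν : Measure G) [SFinite μ] [SFinite ν] :
    (c • μ).conv ν = c • (μ.conv ν) := by
  unfold Measure.conv
  have h : (c • μ).prod ν = c • (μ.prod ν) := by
    ext s hs
    rw [Measure.prod_apply hs, Measure.smul_apply, Measure.prod_apply hs,
      lintegral_smul_measure, smul_eq_mul]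
  rw [h, Measure.map_smul]

lemma myConvSmul (c : ENNReal) (μ ν : Measure G) [SFinite μ] [SFinite ν] :
    μ.conv (c • ν) = c • (μ.conv ν) := by
  unfold Measure.conv
  have h : μ.prod (c • ν) = c • (μ.prod ν) := by
    ext s hs
    rw [Measure.prod_apply hs]
    simp only [Measure.smul_apply, smul_eq_mul]
    rw [Measure.prod_apply hs, ← lintegral_const_mul _ (measurable_measure_prodMk_left hs)]
  rw [h, Measure.map_smul]

lemma mySFiniteSum {ι : Type*} (s : Finset ι) (μ : ι → Measure G) [∀ i, SFinite (μ i)] :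
    SFinite (∑ i ∈ s, μ i) := by
  classical
  induction s using Finset.induction with
  | empty => simpa using inferInstanceAs (SFinite (0 : Measure G))
  | insert _ _ hx ih => rw [Finset.sum_insert hx]; haveI := ih; infer_instance

lemma myConvSum {ι : Type*} (s : Finset ι) (ν : ι → Measure G) [∀ i, SFinite (ν i)]
    (μ : Measure G) [SFinite μ] : μ.conv (∑ i ∈ s, ν i) = ∑ i ∈ s, μ.conv (ν i) := by
  classical
  induction s using Finset.induction with
  | empty => simp [Measure.conv]
  | insert _ _ hx ih =>
    rename_i a s
    haveI := mySFiniteSum s ν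
    rw [Finset.sum_insert hx, Finset.sum_insert hx, Measure.conv_add, ih]

lemma mySumConv {ι : Type*} (s : Finset ι) (ν : ι → Measure G) [∀ i, SFinite (ν i)]
    (μ : Measure G) [SFinite μ] : (∑ i ∈ s, ν i).conv μ = ∑ i ∈ s, (ν i).conv μ := by
  classical
  induction s using Finset.induction with
  | empty => simp [Measure.conv]
  | insert _ _ hx ih =>
    rename_i a s
    haveI := mySFiniteSum s ν
    rw [Finset.sum_insert hx, Finset.sum_insert hx, Measure.add_conv, ih]

end MeasureLemmas

/-! ### The walk written out explicitly -/

noncomputable def step {n d : ℕ} (α : Fin n → Fin d → ℝ) (p : Fin n × Bool) : Torus d :=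
  if p.2 then toTorus (α p.1) else -(toTorus (α p.1))

def sVec {n : ℕ} (p : Fin n × Bool) : Fin n → ℤ :=
  fun j => if p.1 = j then (if p.2 then 1 else -1) else 0

noncomputable def Ssum {n d k : ℕ} (α : Fin n → Fin d → ℝ) (ω : Fin k → Fin n × Bool) : Torus d :=
  ∑ i, step α (ω i)

def Mvec {n k : ℕ} (ω : Fin k → Fin n × Bool) (j : Fin n) : ℤ := ∑ i, sVec (ω i) j

lemma genMeasure_eq {n d : ℕ} (α : Fin n → Fin d → ℝ) :
    genMeasure α = (2 * n : ENNReal)⁻¹ • ∑ p : Fin n × Bool, Measure.dirac (step α p) := by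
  unfold genMeasure
  congr 1
  rw [Fintype.sum_prod_type]
  refine Finset.sum_congr rfl fun j _ => ?_
  rw [Fintype.sum_bool]
  simp [step]

lemma sum_pi_succ {k : ℕ} {A M : Type*} [Fintype A] [AddCommMonoid M] (F : (Fin (k+1) → A) → M) :
    ∑ ω : Fin (k+1) → A, F ω = ∑ p : A, ∑ ω : Fin k → A, F (Fin.cons p ω) := by
  rw [← (Fin.consEquiv (fun _ : Fin (k+1) => A)).sum_comp, Fintype.sum_prod_type]
  rfl

lemma Ssum_cons {n d k : ℕ} (α : Fin n → Fin d → ℝ) (p : Fin n × Bool) (ω : Fin k → Fin n × Bool) :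
    Ssum α (Fin.cons p ω) = step α p + Ssum α ω := by
  unfold Ssum
  rw [Fin.sum_univ_succ]
  simp

lemma Mvec_cons {n k : ℕ} (p : Fin n × Bool) (ω : Fin k → Fin n × Bool) (j : Fin n) :
    Mvec (Fin.cons p ω) j = sVec p j + Mvec ω j := by
  unfold Mvec
  rw [Fin.sum_univ_succ]
  simp

lemma card_words {n k : ℕ} : Fintype.card (Fin k → Fin n × Bool) = (2*n)^k := by
  rw [Fintype.card_fun]; simp [mul_comm]

section ConvFormula
variable {n d : ℕ} (α : Fin n → Fin d → ℝ)

lemma convPow_eq (hn : 0 < n) (k : ℕ) :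
    convPow (genMeasure α) k
      = ((2 * n : ENNReal) ^ k)⁻¹ • ∑ ω : Fin k → Fin n × Bool, Measure.dirac (Ssum α ω) := by
  induction k with
  | zero =>
    rw [pow_zero, inv_one, one_smul, Fintype.sum_unique]
    have : Ssum α (default : Fin 0 → Fin n × Bool) = 0 := by simp [Ssum]
    rw [this]
    rfl
  | succ k ih =>
    show (convPow (genMeasure α) k).conv (genMeasure α) = _
    rw [ih, genMeasure_eq]
    haveI hs1 : SFinite (∑ ω : Fin k → Fin n × Bool, Measure.dirac (Ssum α ω)) :=
      mySFiniteSum _ _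
    haveI hs2 : SFinite (∑ p : Fin n × Bool, Measure.dirac (step α p)) := mySFiniteSum _ _
    have hne : (2 * n : ENNReal) ≠ 0 := by
      simp [hn.ne']
    rw [mySmulConv, myConvSmul, smul_smul, mySumConv,
      ← ENNReal.mul_inv (Or.inl (pow_ne_zero k hne)) (Or.inr hne), ← pow_succ]
    congr 1
    rw [sum_pi_succ (fun ω => Measure.dirac (Ssum α ω))]
    rw [Finset.sum_comm]
    refine Finset.sum_congr rfl fun ω _ => ?_
    rw [myConvSum]
    refine Finset.sum_congr rfl fun p _ => ?_
    rw [myDiracConv, Ssum_cons, add_comm]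

lemma step_eq (p : Fin n × Bool) :
    step α p = ∑ j, sVec p j • toTorus (α j) := by
  have h : ∀ j : Fin n, sVec p j • toTorus (α j) = if p.1 = j then step α p else 0 := by
    intro j
    rcases p with ⟨i, b⟩
    by_cases h : i = j
    · subst h; cases b <;> simp [sVec, step]
    · simp [sVec, h]
  simp only [h]
  rw [Finset.sum_ite_eq]
  simp

lemma Ssum_eq_Mvec {k : ℕ} (ω : Fin k → Fin n × Bool) :
    Ssum α ω = ∑ j, Mvec ω j • toTorus (α j) := by
  unfold Ssum Mvec
  simp only [step_eq α]
  rw [Finset.sum_comm]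
  refine Finset.sum_congr rfl fun j _ => ?_
  rw [← Finset.sum_smul]

end ConvFormula

/-! ### Second moment and pigeonhole -/

lemma sVec_sq_sum {n : ℕ} (p : Fin n × Bool) : ∑ j, (sVec p j)^2 = 1 := by
  have h : ∀ j, (sVec p j)^2 = if p.1 = j then 1 else 0 := by
    intro j
    unfold sVec
    split_ifs with h1 h2 <;> norm_num
  simp only [h]
  rw [Finset.sum_ite_eq]
  simp

lemma sVec_total {n : ℕ} (j : Fin n) : ∑ p : Fin n × Bool, sVec p j = 0 := by
  rw [Fintype.sum_prod_type]
  refine Finset.sum_eq_zero fun j' _ => ?_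
  rw [Fintype.sum_bool]
  by_cases h : j' = j <;> simp [sVec, h]

lemma second_moment {n : ℕ} (k : ℕ) :
    ∑ ω : Fin k → Fin n × Bool, ∑ j, (Mvec ω j)^2 = (k : ℤ) * (2*n)^k := by
  induction k with
  | zero =>
    rw [Fintype.sum_unique]
    simp [Mvec]
  | succ k ih =>
    rw [sum_pi_succ (fun ω => ∑ j, (Mvec ω j)^2)]
    have expand : ∀ (p : Fin n × Bool) (ω : Fin k → Fin n × Bool),
        ∑ j, (Mvec (Fin.cons p ω) j)^2
          = 1 + ((∑ j, 2*(sVec p j * Mvec ω j)) + ∑ j, (Mvec ω j)^2) := by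
      intro p ω
      conv_rhs => rw [← sVec_sq_sum p]
      rw [← Finset.sum_add_distrib, ← Finset.sum_add_distrib]
      refine Finset.sum_congr rfl fun j _ => ?_
      rw [Mvec_cons]
      ring
    rw [Finset.sum_comm]
    have hω : ∀ ω : Fin k → Fin n × Bool,
        ∑ p : Fin n × Bool, ∑ j, (Mvec (Fin.cons p ω) j)^2
          = 2*(n:ℤ) + 2*n * ∑ j, (Mvec ω j)^2 := by
      intro ω
      simp only [expand]
      rw [Finset.sum_add_distrib, Finset.sum_add_distrib]
      have hcross : ∑ p : Fin n × Bool, ∑ j, 2*(sVec p j * Mvec ω j) = 0 := by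
        rw [Finset.sum_comm]
        refine Finset.sum_eq_zero fun j _ => ?_
        rw [← Finset.mul_sum, ← Finset.sum_mul, sVec_total]
        ring
      rw [hcross, Finset.sum_const, Finset.sum_const, Finset.card_univ, Fintype.card_prod,
        Fintype.card_bool, Fintype.card_fin]
      push_cast
      ring
    simp only [hω]
    rw [Finset.sum_add_distrib, Finset.sum_const, ← Finset.mul_sum, ih, Finset.card_univ,
      card_words]
    push_cast
    ring

lemma exists_heavy {n : ℕ} (k : ℕ) (hk : 1 ≤ k) :
    ∃ m : Fin n → ℤ, (2*n)^k ≤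
      2 * (2 * Nat.sqrt (2*k) + 1)^n *
        (Finset.univ.filter fun ω : Fin k → Fin n × Bool => Mvec ω = m).card := by
  classical
  set t := Nat.sqrt (2*k) with ht
  set Q : (Fin k → Fin n × Bool) → ℤ := fun ω => ∑ j, (Mvec ω j)^2 with hQ
  have hQnonneg : ∀ ω, 0 ≤ Q ω := fun ω => Finset.sum_nonneg fun j _ => sq_nonneg _
  set good := Finset.univ.filter fun ω : Fin k → Fin n × Bool => Q ω ≤ 2*k with hgood
  set bad := Finset.univ.filter fun ω : Fin k → Fin n × Bool => ¬ (Q ω ≤ 2*k) with hbad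
  have hsum : ∑ ω ∈ bad, Q ω ≤ (k : ℤ) * (2*n)^k := by
    rw [← second_moment k]
    exact Finset.sum_le_sum_of_subset_of_nonneg (Finset.subset_univ _)
      (fun ω _ _ => hQnonneg ω)
  have hbadlb : (2*(k:ℤ)+1) * bad.card ≤ ∑ ω ∈ bad, Q ω := by
    have h := Finset.card_nsmul_le_sum bad Q (2*(k:ℤ)+1)
      (fun ω hω => by
        have := (Finset.mem_filter.mp hω).2
        omega)
    rw [nsmul_eq_mul] at h
    linarith
  have hcards : good.card + bad.card = (2*n)^k := by
    rw [hgood, hbad, Finset.card_filter_add_card_filter_not, Finset.card_univ, card_words]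
  have hgoodlb : (2*n)^k ≤ 2 * good.card := by
    have hbg : (bad.card : ℤ) ≤ good.card := by
      have h1 : (2*(k:ℤ)+1) * bad.card ≤ k * (2*n)^k := le_trans hbadlb hsum
      have h2 : ((2*n)^k : ℤ) = good.card + bad.card := by exact_mod_cast hcards.symm
      nlinarith [Int.natCast_nonneg bad.card, Int.natCast_nonneg good.card]
    have : ((2*n)^k : ℤ) ≤ 2 * good.card := by
      have : ((2*n)^k : ℤ) = good.card + bad.card := by exact_mod_cast hcards.symm
      omega
    exact_mod_cast this
  set cube : Finset (Fin n → ℤ) := Fintype.piFinset fun _ => Finset.Icc (-(t:ℤ)) t with hcube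
  have hmaps : ∀ ω ∈ good, Mvec ω ∈ cube := by
    intro ω hω
    have hQω : Q ω ≤ 2*k := (Finset.mem_filter.mp hω).2
    rw [hcube, Fintype.mem_piFinset]
    intro j
    have hsq : (Mvec ω j)^2 ≤ 2*k := by
      refine le_trans ?_ hQω
      exact Finset.single_le_sum (fun i _ => sq_nonneg (Mvec ω i)) (Finset.mem_univ j)
    have habs : (Mvec ω j).natAbs ≤ t := by
      rw [ht, Nat.le_sqrt']
      zify
      rw [sq_abs]
      exact hsq
    have habs' : |Mvec ω j| ≤ (t : ℤ) := by
      rw [Int.abs_eq_natAbs]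
      exact_mod_cast habs
    rw [Finset.mem_Icc]
    exact ⟨neg_le_of_abs_le habs', le_of_abs_le habs'⟩
  have hcubecard : cube.card = (2*t+1)^n := by
    rw [hcube, Fintype.card_piFinset]
    have h2 : ((t:ℤ) + 1 + t).toNat = 2*t+1 := by omega
    simp [Int.card_Icc, sub_neg_eq_add, h2]
  have hcubene : cube.Nonempty :=
    ⟨0, by rw [hcube, Fintype.mem_piFinset]; intro j; rw [Finset.mem_Icc]; constructor <;> simp⟩
  have hfiber : good.card = ∑ m ∈ cube, (good.filter fun ω => Mvec ω = m).card :=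
    Finset.card_eq_sum_card_fiberwise hmaps
  have hpig : ∃ m ∈ cube, good.card ≤ cube.card * (good.filter fun ω => Mvec ω = m).card := by
    refine Finset.exists_le_of_sum_le hcubene ?_
    rw [Finset.sum_const, ← Finset.mul_sum, ← hfiber, smul_eq_mul]
  obtain ⟨m, _, hm⟩ := hpig
  refine ⟨m, ?_⟩
  have hsubset : (good.filter fun ω => Mvec ω = m).card ≤
      (Finset.univ.filter fun ω : Fin k → Fin n × Bool => Mvec ω = m).card := by
    apply Finset.card_le_card
    intro ω hω
    rw [Finset.mem_filter] at hω ⊢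
    exact ⟨Finset.mem_univ _, hω.2⟩
  calc (2*n)^k ≤ 2 * good.card := hgoodlb
    _ ≤ 2 * (cube.card * (good.filter fun ω => Mvec ω = m).card) := Nat.mul_le_mul_left _ hm
    _ ≤ 2 * (2*t+1)^n * (Finset.univ.filter fun ω : Fin k → Fin n × Bool => Mvec ω = m).card := by
        rw [hcubecard, mul_assoc]
        exact Nat.mul_le_mul_left _ (Nat.mul_le_mul_left _ hsubset)

/-! ### Geometry of arcs -/

lemma arc_subset_ball (a ε : ℝ) (hε2 : ε ≤ 1/2) :
    arcSet a (a + ε) ⊆ Metric.closedBall (((a + ε/2 : ℝ) : UnitAddCircle)) (ε/2) := by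
  rintro _ ⟨x, ⟨hx1, hx2⟩, rfl⟩
  rw [Metric.mem_closedBall, dist_eq_norm]
  have heq : (x : UnitAddCircle) - ((a + ε/2 : ℝ) : UnitAddCircle)
      = ((x - (a + ε/2) : ℝ) : UnitAddCircle) := rfl
  rw [heq]
  calc ‖((x - (a + ε/2) : ℝ) : UnitAddCircle)‖ ≤ |x - (a + ε/2)| := by
        simpa using QuotientAddGroup.norm_mk_le_norm (S := AddSubgroup.zmultiples (1:ℝ)) (m := x - (a + ε/2))
    _ ≤ ε/2 := by
        rw [abs_le]
        constructor <;> linarith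

lemma arc_volume_le (a ε : ℝ) (hε : 0 ≤ ε) (hε2 : ε ≤ 1/2) :
    volume (arcSet a (a + ε)) ≤ ENNReal.ofReal ε := by
  calc volume (arcSet a (a + ε))
      ≤ volume (Metric.closedBall (((a + ε/2 : ℝ) : UnitAddCircle)) (ε/2)) :=
        measure_mono (arc_subset_ball a ε hε2)
    _ = ENNReal.ofReal (min 1 (2*(ε/2))) := AddCircle.volume_closedBall _ _
    _ ≤ ENNReal.ofReal ε := by
        apply ENNReal.ofReal_le_ofReal
        rw [min_le_iff]
        right
        linarith

/-- Lower bound: D(Q^{*k}) ≥ k^(−n/2) / (π^d · 5^(n+1) · d^(n/2)). -/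
theorem discrepancy_lower_bound (n d : ℕ) (hn : 0 < n) (hd : 0 < d)
    (α : Fin n → Fin d → ℝ) (k : ℕ) (hk : 1 ≤ k) :
    disc (convPow (genMeasure α) k) ≥
      (k : ℝ) ^ (-(n : ℝ) / 2) / (π ^ d * 5 ^ (n + 1) * (d : ℝ) ^ ((n : ℝ) / 2)) := by
  classical
  set P := convPow (genMeasure α) k with hPdef
  obtain ⟨m, hm⟩ := exists_heavy (n := n) k hk
  set t := Nat.sqrt (2*k) with htdef
  set fib := (Finset.univ.filter fun ω : Fin k → Fin n × Bool => Mvec ω = m) with hfib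
  set x : Torus d := ∑ j, m j • toTorus (α j) with hx
  have hP : P = ((2 * n : ENNReal) ^ k)⁻¹ • ∑ ω : Fin k → Fin n × Bool,
      Measure.dirac (Ssum α ω) := convPow_eq α hn k
  have hNne : ((2 * n : ENNReal)) ≠ 0 := by simp [hn.ne']
  have hNnetop : ((2 * n : ENNReal)) ≠ ⊤ := ENNReal.mul_ne_top (by simp) (ENNReal.natCast_ne_top n)
  have hNkne : ((2 * n : ENNReal) ^ k) ≠ 0 := pow_ne_zero _ hNne
  have hNknetop : ((2 * n : ENNReal) ^ k) ≠ ⊤ := ENNReal.pow_ne_top hNnetop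
  -- total mass of P is 1
  have hPuniv : P Set.univ = 1 := by
    rw [hP, Measure.smul_apply, Measure.finset_sum_apply, smul_eq_mul]
    have h1 : ∀ ω : Fin k → Fin n × Bool, Measure.dirac (Ssum α ω) Set.univ = 1 :=
      fun ω => Measure.dirac_apply_of_mem (Set.mem_univ _)
    rw [Finset.sum_congr rfl fun ω _ => h1 ω, Finset.sum_const, Finset.card_univ, card_words,
      nsmul_eq_mul, mul_one]
    have h2 : (((2*n)^k : ℕ) : ENNReal) = (2 * n : ENNReal) ^ k := by push_cast; ring
    rw [h2, ENNReal.inv_mul_cancel hNkne hNknetop]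
  have hPle1 : ∀ S : Set (Torus d), P S ≤ 1 := fun S =>
    le_trans (measure_mono (Set.subset_univ S)) (le_of_eq hPuniv)
  -- lower bound on the mass of the atom x
  have hPx : ((2 * n : ENNReal) ^ k)⁻¹ * fib.card ≤ P {x} := by
    rw [hP, Measure.smul_apply, smul_eq_mul]
    refine mul_le_mul_right ?_ _
    have h1 : ∀ ω ∈ fib, Measure.dirac (Ssum α ω) {x} = 1 := by
      intro ω hω
      have hmv : Mvec ω = m := (Finset.mem_filter.mp hω).2
      have hS : Ssum α ω = x := by rw [Ssum_eq_Mvec, hmv]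
      exact Measure.dirac_apply_of_mem (by simp [hS])
    calc (fib.card : ENNReal) = ∑ _ω ∈ fib, (1 : ENNReal) := by simp
      _ = ∑ ω ∈ fib, Measure.dirac (Ssum α ω) {x} :=
          (Finset.sum_congr rfl fun ω hω => (h1 ω hω).symm)
      _ ≤ ∑ ω : Fin k → Fin n × Bool, Measure.dirac (Ssum α ω) {x} :=
          Finset.sum_le_sum_of_subset (Finset.subset_univ _)
      _ = (∑ ω : Fin k → Fin n × Bool, Measure.dirac (Ssum α ω)) {x} :=
          (Measure.finset_sum_apply _ _ _).symm
  have hPxnetop : P {x} ≠ ⊤ := ne_top_of_le_ne_top (by simp) (hPle1 {x})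
  set mass := (P {x}).toReal with hmassdef
  -- real lower bound on mass
  have htoReal : (((2 * n : ENNReal) ^ k)⁻¹ * fib.card).toReal
      = (fib.card : ℝ) / (2*n : ℝ)^k := by
    rw [ENNReal.toReal_mul, ENNReal.toReal_inv, ENNReal.toReal_pow]
    simp [div_eq_inv_mul]
  have hNR : (0:ℝ) < (2*n : ℝ)^k := by positivity
  have hCpos : (0:ℝ) < 2*(2*(t:ℝ)+1)^n := by positivity
  have hmR : ((2*n : ℝ))^k ≤ 2*(2*(t:ℝ)+1)^n * fib.card := by
    exact_mod_cast hm
  have hmass1 : 1 / (2*(2*(t:ℝ)+1)^n) ≤ mass := by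
    have h2 : (fib.card : ℝ) / (2*n : ℝ)^k ≤ mass := by
      rw [hmassdef, ← htoReal]
      exact ENNReal.toReal_mono hPxnetop hPx
    refine le_trans ?_ h2
    rw [div_le_div_iff₀ hCpos hNR]
    calc 1 * (2*n : ℝ)^k = (2*n : ℝ)^k := one_mul _
      _ ≤ 2*(2*(t:ℝ)+1)^n * fib.card := hmR
      _ = (fib.card : ℝ) * (2*(2*(t:ℝ)+1)^n) := mul_comm _ _
  -- arithmetic: the target R is smaller than 1/C
  set K := Real.sqrt k ^ n with hKdef
  set D := π ^ d * (5:ℝ) ^ (n + 1) * (d : ℝ) ^ ((n : ℝ) / 2) with hDdef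
  set R := (k : ℝ) ^ (-(n : ℝ) / 2) / D with hRdef
  have hk1 : (1:ℝ) ≤ k := by exact_mod_cast hk
  have hsqk : 1 ≤ Real.sqrt k := Real.one_le_sqrt.mpr hk1
  have hK1 : (1:ℝ) ≤ K := one_le_pow₀ hsqk
  have hKpos : (0:ℝ) < K := lt_of_lt_of_le one_pos hK1
  have hKrpow : (k : ℝ) ^ ((n : ℝ) / 2) = K := by
    rw [hKdef, Real.sqrt_eq_rpow, ← Real.rpow_natCast ((k:ℝ) ^ ((1:ℝ)/2)) n,
      ← Real.rpow_mul (by positivity)]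
    congr 1
    ring
  have hDpos : (0:ℝ) < D := by
    rw [hDdef]
    have : (0:ℝ) < π := Real.pi_pos
    positivity
  have hR : R = 1 / (K * D) := by
    rw [hRdef, neg_div, Real.rpow_neg (by positivity), hKrpow, one_div, mul_inv,
      div_eq_inv_mul, mul_comm]
  -- t ≤ √2 √k
  have ht2 : (t:ℝ) ≤ Real.sqrt 2 * Real.sqrt k := by
    rw [← Real.sqrt_mul (by norm_num) (k:ℝ)]
    have h1 : (t:ℝ)^2 ≤ 2 * (k:ℝ) := by
      have h0 : ((t^2 : ℕ) : ℝ) ≤ ((2*k : ℕ) : ℝ) := Nat.cast_le.mpr (Nat.sqrt_le' (2*k))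
      push_cast at h0
      linarith
    calc (t:ℝ) ≤ Real.sqrt ((t:ℝ)^2) := by rw [Real.sqrt_sq (by positivity)]
      _ ≤ Real.sqrt (2*(k:ℝ)) := Real.sqrt_le_sqrt h1
  have hsqrt2 : Real.sqrt 2 ≤ 3/2 := by
    rw [show (3/2:ℝ) = Real.sqrt ((3/2)^2) from (Real.sqrt_sq (by norm_num)).symm]
    exact Real.sqrt_le_sqrt (by norm_num)
  have hside : 2*(t:ℝ)+1 ≤ 4 * Real.sqrt k := by
    have hmul := mul_le_mul_of_nonneg_right hsqrt2 (Real.sqrt_nonneg (k:ℝ))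
    linarith
  have hC4 : 2*(2*(t:ℝ)+1)^n ≤ 2 * (4:ℝ)^n * K := by
    have h1 : (2*(t:ℝ)+1)^n ≤ (4 * Real.sqrt k)^n :=
      pow_le_pow_left₀ (by positivity) hside n
    rw [mul_pow] at h1
    calc 2*(2*(t:ℝ)+1)^n ≤ 2 * ((4:ℝ)^n * Real.sqrt k ^ n) := by linarith
      _ = 2 * (4:ℝ)^n * K := by rw [hKdef]; ring
  have hD15 : 15 * (4:ℝ)^n ≤ D := by
    have hpi : (3:ℝ) ≤ π ^ d := by
      calc (3:ℝ) ≤ π := by linarith [Real.pi_gt_three]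
        _ ≤ π ^ d := le_self_pow₀ (by linarith [Real.pi_gt_three]) hd.ne'
    have h5 : 5 * (4:ℝ)^n ≤ (5:ℝ)^(n+1) := by
      rw [pow_succ, mul_comm ((5:ℝ)^n) 5]
      have : (4:ℝ)^n ≤ (5:ℝ)^n := pow_le_pow_left₀ (by norm_num) (by norm_num) n
      linarith
    have hdr : (1:ℝ) ≤ (d : ℝ) ^ ((n : ℝ) / 2) :=
      Real.one_le_rpow (by exact_mod_cast hd) (by positivity)
    have h4 : (0:ℝ) < (4:ℝ)^n := by positivity
    calc 15 * (4:ℝ)^n = 3 * (5 * (4:ℝ)^n) * 1 := by ring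
      _ ≤ π ^ d * (5:ℝ)^(n+1) * ((d : ℝ) ^ ((n : ℝ) / 2)) := by
          have hA : 3 * (5 * (4:ℝ)^n) ≤ π ^ d * (5:ℝ)^(n+1) :=
            mul_le_mul hpi h5 (by positivity) (le_trans (by norm_num) hpi)
          exact mul_le_mul hA hdr (by norm_num) (by positivity)
      _ = D := hDdef.symm
  have hRlt : R < 1 / (2*(2*(t:ℝ)+1)^n) := by
    rw [hR]
    have h1 : K * (15 * (4:ℝ)^n) ≤ K * D := by
      exact mul_le_mul_of_nonneg_left hD15 hKpos.le
    have h2 : (1:ℝ) / (K * D) ≤ 1 / (K * (15 * (4:ℝ)^n)) :=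
      one_div_le_one_div_of_le (by positivity) h1
    have h3 : 2*(2*(t:ℝ)+1)^n ≤ 2 * (4:ℝ)^n * K := hC4
    have h4 : (1:ℝ) / (2 * (4:ℝ)^n * K) ≤ 1 / (2*(2*(t:ℝ)+1)^n) :=
      one_div_le_one_div_of_le hCpos h3
    have h5 : (1:ℝ) / (K * (15 * (4:ℝ)^n)) < 1 / (2 * (4:ℝ)^n * K) := by
      apply one_div_lt_one_div_of_lt (by positivity)
      have h4pos : (0:ℝ) < (4:ℝ)^n := by positivity
      have h6 : (2:ℝ) * (4:ℝ)^n < 15 * (4:ℝ)^n := by linarith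
      calc 2 * (4:ℝ)^n * K < 15 * (4:ℝ)^n * K := mul_lt_mul_of_pos_right h6 hKpos
        _ = K * (15 * (4:ℝ)^n) := by ring
    linarith
  set δ := 1 / (2*(2*(t:ℝ)+1)^n) - R with hδdef
  have hδpos : 0 < δ := by rw [hδdef]; linarith
  set ε := min (1/2 : ℝ) δ with hεdef
  have hε0 : 0 < ε := lt_min (by norm_num) hδpos
  have hε12 : ε ≤ 1/2 := min_le_left _ _
  have hεδ : ε ≤ δ := min_le_right _ _
  -- choose a box around x
  have hsur : ∀ i, ∃ rr : ℝ, (rr : UnitAddCircle) = x i := fun i => Quotient.exists_rep (x i)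
  choose r hr using hsur
  set b : Fin d → ℝ := fun i => r i + ε with hbdef
  have hxmem : x ∈ box r b := by
    rw [box, Set.mem_univ_pi]
    intro i
    exact ⟨r i, ⟨le_refl _, by rw [hbdef]; exact lt_add_of_pos_right _ hε0⟩, hr i⟩
  have hvol : (volume (box r b)).toReal ≤ ε := by
    have h1 : volume (box r b) ≤ ENNReal.ofReal ε ^ d := by
      rw [box, MeasureTheory.volume_pi, Measure.pi_pi]
      calc ∏ i, volume (arcSet (r i) (b i)) ≤ ∏ _i : Fin d, ENNReal.ofReal ε := by
            refine Finset.prod_le_prod' fun i _ => ?_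
            rw [hbdef]
            exact arc_volume_le (r i) ε hε0.le (by linarith)
        _ = ENNReal.ofReal ε ^ d := by rw [Finset.prod_const, Finset.card_univ, Fintype.card_fin]
    calc (volume (box r b)).toReal ≤ (ENNReal.ofReal ε ^ d).toReal :=
          ENNReal.toReal_mono (by simp) h1
      _ = ε ^ d := by rw [ENNReal.toReal_pow, ENNReal.toReal_ofReal hε0.le]
      _ ≤ ε ^ 1 := pow_le_pow_of_le_one hε0.le (by linarith) hd
      _ = ε := pow_one _
  have hPbox : mass ≤ (P (box r b)).toReal := by
    refine ENNReal.toReal_mono (ne_top_of_le_ne_top (by simp) (hPle1 _)) ?_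
    exact measure_mono (Set.singleton_subset_iff.mpr hxmem)
  -- the key estimate for this box
  have hkey : R ≤ |(P (box r b)).toReal - (volume (box r b)).toReal| := by
    refine le_trans ?_ (le_abs_self _)
    calc R = 1 / (2*(2*(t:ℝ)+1)^n) - δ := by rw [hδdef]; ring
      _ ≤ mass - δ := by linarith [hmass1]
      _ ≤ mass - ε := by linarith [hεδ]
      _ ≤ (P (box r b)).toReal - (volume (box r b)).toReal := by linarith [hPbox, hvol]
  -- the sup is at least this value
  have hb1 : ∀ a' b' : Fin d → ℝ,
      |(P (box a' b')).toReal - (volume (box a' b')).toReal| ≤ 1 := by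
    intro a' b'
    have h1 : (P (box a' b')).toReal ≤ 1 := by
      have := ENNReal.toReal_mono (by simp) (hPle1 (box a' b'))
      simpa using this
    have h2 : (volume (box a' b')).toReal ≤ 1 := by
      have hv : volume (box a' b') ≤ 1 := by
        refine le_trans (measure_mono (Set.subset_univ _)) ?_
        rw [MeasureTheory.volume_pi, Measure.pi_univ]
        simp
      have := ENNReal.toReal_mono (by simp) hv
      simpa using this
    rw [abs_le]
    constructor
    · have := ENNReal.toReal_nonneg (a := P (box a' b'))
      linarith [ENNReal.toReal_nonneg (a := volume (box a' b'))]
    · linarith [ENNReal.toReal_nonneg (a := volume (box a' b'))]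
  show disc P ≥ R
  have hinner : ∀ a' : Fin d → ℝ, BddAbove (Set.range fun b' =>
      |(P (box a' b')).toReal - (volume (box a' b')).toReal|) := by
    intro a'
    exact ⟨1, by rintro y ⟨b', rfl⟩; exact hb1 a' b'⟩
  have houter : BddAbove (Set.range fun a' : Fin d → ℝ => ⨆ b' : Fin d → ℝ,
      |(P (box a' b')).toReal - (volume (box a' b')).toReal|) := by
    refine ⟨1, ?_⟩
    rintro y ⟨a', rfl⟩
    exact ciSup_le fun b' => hb1 a' b'
  calc R ≤ |(P (box r b)).toReal - (volume (box r b)).toReal| := hkey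
    _ ≤ ⨆ b' : Fin d → ℝ, |(P (box r b')).toReal - (volume (box r b')).toReal| :=
        le_ciSup (hinner r) b
    _ ≤ disc P := le_ciSup houter r
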